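/- arXiv:2009.02551 — 7 statements merged into one kernel-verified Lean document; each statement's English description precedes it below -/
import Mathlib

section
/- Suppose exactly one IRS i ∈ 𝒥 is associated with user k, so the average SINR of user k as a function of the (real) number M ≥ 0 of reflecting elements per IRS is γ_k(M) = P_k(α²_{k,k} + M·B_k + (π² M²/16) q²_{k,i,k}) / (D_k + M·C_k), where B_k = Σ_{j∈𝒥} q²_{k,j,k} + (π^{3/2} α_{k,k}/4) q_{k,i,k} − q²_{k,i,k}, C_k = Σ_{n∈𝒦,n≠k} P_n Σ_{j∈𝒥} q²_{n,j,k}, and D_k = σ² + Σ_{n∈𝒦,n≠k} P_n α²_{n,k}. If C_k·α²_{k,k} ≤ B_k·D_k, then γ_k is monotonically increasing in M on [0,∞), i.e., for all 0 ≤ M₁ < M₂ one has γ_k(M₁) < γ_k(M₂). (Proposition 3, monotone case.) -/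
/-! After clearing denominators, the increment of `(a + b x + c x²) / (d + e x)` between
`x < y` has the sign of `(y - x) (b d - e a + c d (x + y) + c e x y)`, and for `x, y ≥ 0`
the second factor is positive as soon as `e a ≤ b d`. The SINR is of this form, with
`d = D > 0` and `e = C ≥ 0` both sums of nonnegative terms. -/

open Finset Set

theorem strictMonoOn_quadratic_div_linear {𝕜 : Type*} [Field 𝕜] [LinearOrder 𝕜]
    [IsStrictOrderedRing 𝕜] {a b c d e : 𝕜} (hc : 0 < c) (hd : 0 < d) (he : 0 ≤ e)
    (h : e * a ≤ b * d) :
    StrictMonoOn (fun x => (a + b * x + c * x ^ 2) / (d + e * x)) (Ici 0) := by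
  intro x (hx : 0 ≤ x) y (hy : 0 ≤ y) hxy
  rw [div_lt_div_iff₀ (by positivity) (by positivity), ← sub_pos]
  have hxy_pos : 0 < x + y := by linarith
  have key : (a + b * y + c * y ^ 2) * (d + e * x) - (a + b * x + c * x ^ 2) * (d + e * y)
      = (y - x) * ((b * d - e * a) + c * d * (x + y) + c * e * x * y) := by ring
  rw [key]
  refine mul_pos (sub_pos.2 hxy) (add_pos_of_pos_of_nonneg ?_ (by positivity))
  exact add_pos_of_nonneg_of_pos (sub_nonneg.2 h) (by positivity)

theorem stmt_3_general
    {K J : Type*} [Fintype K] [DecidableEq K] [Fintype J]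
    (P : K → ℝ) (hP : ∀ n, 0 < P n)
    (σ2 : ℝ) (hσ : 0 < σ2)
    (α : K → K → ℝ)
    (q : K → J → K → ℝ) (hq : ∀ n j k, 0 < q n j k)
    (k : K) (i : J)
    (B C D : ℝ)
    (hC : C = ∑ n ∈ Finset.univ.erase k, P n * ∑ j, (q n j k) ^ 2)
    (hD : D = σ2 + ∑ n ∈ Finset.univ.erase k, P n * (α n k) ^ 2)
    (γ : ℝ → ℝ)
    (hγ : ∀ M : ℝ, γ M =
      P k * ((α k k) ^ 2 + M * B + Real.pi ^ 2 * M ^ 2 / 16 * (q k i k) ^ 2) / (D + M * C))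
    (hcond : C * (α k k) ^ 2 ≤ B * D) :
    ∀ M1 M2 : ℝ, 0 ≤ M1 → M1 < M2 → γ M1 < γ M2 := by
  have hD_pos : 0 < D := hD ▸ add_pos_of_pos_of_nonneg hσ
    (sum_nonneg fun n _ => mul_nonneg (hP n).le (sq_nonneg _))
  have hC_nonneg : 0 ≤ C := hC ▸ sum_nonneg fun n _ =>
    mul_nonneg (hP n).le (sum_nonneg fun j _ => sq_nonneg _)
  have hγ_eq : γ = fun M => (P k * α k k ^ 2 + P k * B * M
      + P k * (Real.pi ^ 2 / 16 * q k i k ^ 2) * M ^ 2) / (D + C * M) := by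
    funext M
    rw [hγ]
    ring
  have hcond_scaled : C * (P k * α k k ^ 2) ≤ P k * B * D := by
    linarith [mul_le_mul_of_nonneg_left hcond (hP k).le]
  have hc : 0 < P k * (Real.pi ^ 2 / 16 * q k i k ^ 2) :=
    mul_pos (hP k) (by have := hq k i k; positivity)
  intro M1 M2 hM1 hM12
  rw [hγ_eq]
  exact strictMonoOn_quadratic_div_linear hc hD_pos hC_nonneg hcond_scaled hM1
    (hM1.trans hM12.le) hM12

/-- Proposition 3 (monotone case): with exactly one IRS `i` associated with user `k`,
if `C_k α²_{k,k} ≤ B_k D_k`, then the average SINR `γ` of user `k` is monotonically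
increasing in the (real) number `M ≥ 0` of reflecting elements per IRS. -/
theorem stmt_3
    {K J : Type*} [Fintype K] [DecidableEq K] [Fintype J] [Nonempty J]
    (hK : 1 < Fintype.card K)
    (P : K → ℝ) (hP : ∀ n, 0 < P n)
    (σ2 : ℝ) (hσ : 0 < σ2)
    (α : K → K → ℝ) (hα : ∀ n k, 0 < α n k)
    (q : K → J → K → ℝ) (hq : ∀ n j k, 0 < q n j k)
    (k : K) (i : J)
    (B C D : ℝ)
    (hB : B = ∑ j, (q k j k) ^ 2
      + Real.pi * Real.sqrt Real.pi * α k k / 4 * q k i k - (q k i k) ^ 2)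
    (hC : C = ∑ n ∈ Finset.univ.erase k, P n * ∑ j, (q n j k) ^ 2)
    (hD : D = σ2 + ∑ n ∈ Finset.univ.erase k, P n * (α n k) ^ 2)
    (γ : ℝ → ℝ)
    (hγ : ∀ M : ℝ, γ M =
      P k * ((α k k) ^ 2 + M * B + Real.pi ^ 2 * M ^ 2 / 16 * (q k i k) ^ 2) / (D + M * C))
    (hcond : C * (α k k) ^ 2 ≤ B * D) :
    ∀ M1 M2 : ℝ, 0 ≤ M1 → M1 < M2 → γ M1 < γ M2 :=
  stmt_3_general P hP σ2 hσ α q hq k i B C D hC hD γ hγ hcond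
end

section
/- Suppose exactly one IRS i ∈ 𝒥 is associated with user k, so the average SINR of user k with M reflecting elements per IRS is γ_k(M) = P_k(α²_{k,k} + M·B_k + (π² M²/16) q²_{k,i,k}) / (D_k + M·C_k), where B_k = Σ_{j∈𝒥} q²_{k,j,k} + (π^{3/2} α_{k,k}/4) q_{k,i,k} − q²_{k,i,k}, C_k = Σ_{n∈𝒦,n≠k} P_n Σ_{j∈𝒥} q²_{n,j,k}, and D_k = σ² + Σ_{n∈𝒦,n≠k} P_n α²_{n,k}, and let γ_{k,0} = P_k α²_{k,k} / D_k denote the SINR of user k in the benchmark system without IRS. If the real number M satisfies M > max{ (16/π²)(α²_{k,k} C_k/(q²_{k,i,k} D_k) − B_k/q²_{k,i,k}), 0 }, then γ_k(M) > γ_{k,0}. (Threshold condition (25) for outperforming the no-IRS benchmark.) -/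
/-!
Clearing the (positive) denominators, `γ(M) > γ_{k,0}` is equivalent to
`M · (B D + (π² q²/16) M D − α² C) > 0`. For `M > 0` this is linear in `M`, and the threshold
of condition (25) is exactly its root `(α² C / D − B) / (π² q² / 16)`.
-/

lemma div_lt_div_add_quadratic_of_lt {p a B C D r M : ℝ} (hp : 0 < p) (hD : 0 < D)
    (hC : 0 ≤ C) (hr : 0 < r) (hM₀ : 0 < M) (hM : (a * C / D - B) / r < M) :
    p * a / D < p * (a + M * B + r * M ^ 2) / (D + M * C) := by
  have hden : 0 < D + M * C := by positivity
  have hlin : a * C < B * D + r * M * D := by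
    rw [div_lt_iff₀ hr, sub_lt_iff_lt_add, div_lt_iff₀ hD] at hM
    linarith
  rw [div_lt_div_iff₀ hD hden]
  have key : M * (a * C) < M * (B * D + r * M * D) := mul_lt_mul_of_pos_left hlin hM₀
  nlinarith [mul_lt_mul_of_pos_left key hp]

theorem stmt_6_general
    {K J : Type*} [Fintype K] [DecidableEq K] [Fintype J]
    (P : K → ℝ) (hP : ∀ n, 0 < P n)
    (σ2 : ℝ) (hσ : 0 < σ2)
    (α : K → K → ℝ)
    (q : K → J → K → ℝ) (hq : ∀ n j k, 0 < q n j k)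
    (k : K) (i : J)
    (B C D : ℝ)
    (hC : C = ∑ n ∈ Finset.univ.erase k, P n * ∑ j, (q n j k) ^ 2)
    (hD : D = σ2 + ∑ n ∈ Finset.univ.erase k, P n * (α n k) ^ 2)
    (γ : ℝ → ℝ)
    (hγ : ∀ M : ℝ, γ M =
      P k * ((α k k) ^ 2 + M * B + Real.pi ^ 2 * M ^ 2 / 16 * (q k i k) ^ 2) / (D + M * C))
    (M : ℝ)
    (hM : M > max (16 / Real.pi ^ 2
      * ((α k k) ^ 2 * C / ((q k i k) ^ 2 * D) - B / (q k i k) ^ 2)) 0) :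
    γ M > P k * (α k k) ^ 2 / D := by
  obtain ⟨hM_thr, hM₀⟩ := max_lt_iff.mp hM
  have hD₀ : 0 < D := by
    rw [hD]
    exact add_pos_of_pos_of_nonneg hσ <| Finset.sum_nonneg fun n _ => by
      have := hP n; positivity
  have hC₀ : 0 ≤ C := by
    rw [hC]
    exact Finset.sum_nonneg fun n _ => by have := hP n; positivity
  have hq₀ : q k i k ≠ 0 := (hq k i k).ne'
  have hthr : 16 / Real.pi ^ 2 * ((α k k) ^ 2 * C / ((q k i k) ^ 2 * D) - B / (q k i k) ^ 2)
      = ((α k k) ^ 2 * C / D - B) / (Real.pi ^ 2 * (q k i k) ^ 2 / 16) := by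
    field_simp
  have hquad : Real.pi ^ 2 * M ^ 2 / 16 * (q k i k) ^ 2
      = Real.pi ^ 2 * (q k i k) ^ 2 / 16 * M ^ 2 := by ring
  rw [hγ, hquad]
  exact div_lt_div_add_quadratic_of_lt (hP k) hD₀ hC₀ (by positivity) hM₀ (hthr ▸ hM_thr)

/-- Threshold condition (25): with exactly one IRS `i` associated with user `k`, if
`M > max{(16/π²)(α²_{k,k} C_k/(q²_{k,i,k} D_k) − B_k/q²_{k,i,k}), 0}`, then the average
SINR `γ(M)` of user `k` exceeds the no-IRS benchmark SINR `γ_{k,0} = P_k α²_{k,k}/D_k`. -/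
theorem stmt_6
    {K J : Type*} [Fintype K] [DecidableEq K] [Fintype J] [Nonempty J]
    (hK : 1 < Fintype.card K)
    (P : K → ℝ) (hP : ∀ n, 0 < P n)
    (σ2 : ℝ) (hσ : 0 < σ2)
    (α : K → K → ℝ) (hα : ∀ n k, 0 < α n k)
    (q : K → J → K → ℝ) (hq : ∀ n j k, 0 < q n j k)
    (k : K) (i : J)
    (B C D : ℝ)
    (hB : B = ∑ j, (q k j k) ^ 2
      + Real.pi * Real.sqrt Real.pi * α k k / 4 * q k i k - (q k i k) ^ 2)
    (hC : C = ∑ n ∈ Finset.univ.erase k, P n * ∑ j, (q n j k) ^ 2)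
    (hD : D = σ2 + ∑ n ∈ Finset.univ.erase k, P n * (α n k) ^ 2)
    (γ : ℝ → ℝ)
    (hγ : ∀ M : ℝ, γ M =
      P k * ((α k k) ^ 2 + M * B + Real.pi ^ 2 * M ^ 2 / 16 * (q k i k) ^ 2) / (D + M * C))
    (M : ℝ)
    (hM : M > max (16 / Real.pi ^ 2
      * ((α k k) ^ 2 * C / ((q k i k) ^ 2 * D) - B / (q k i k) ^ 2)) 0) :
    γ M > P k * (α k k) ^ 2 / D :=
  stmt_6_general P hP σ2 hσ α q hq k i B C D hC hD γ hγ M hM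
end

section
/- Suppose exactly one IRS i ∈ 𝒥 is associated with user k, so the average SINR of user k with M reflecting elements per IRS is γ_k(M) = P_k(α²_{k,k} + M·B_k + (π² M²/16) q²_{k,i,k}) / (D_k + M·C_k), where B_k = Σ_{j∈𝒥} q²_{k,j,k} + (π^{3/2} α_{k,k}/4) q_{k,i,k} − q²_{k,i,k}, C_k = Σ_{n∈𝒦,n≠k} P_n Σ_{j∈𝒥} q²_{n,j,k}, and D_k = σ² + Σ_{n∈𝒦,n≠k} P_n α²_{n,k}, and let γ_{k,0} = P_k α²_{k,k} / D_k denote the SINR of user k in the benchmark system without IRS. If the real number M satisfies the relaxed bound M > 16 α²_{k,k} C_k / (π² q²_{k,i,k} D_k), then γ_k(M) > γ_{k,0}. (Relaxed threshold condition (26).) -/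
/-!
Clearing denominators, `γ(M) > P_k α²_{k,k} / D_k` becomes
`α²_{k,k} C_k < D_k B_k + (π²/16) q²_{k,i,k} D_k M` (for `M > 0`). The threshold on `M` makes the
quadratic term alone dominate `α²_{k,k} C_k`, and `B_k > 0` because the one subtracted square
`q²_{k,i,k}` is a term of `∑_j q²_{k,j,k}`.
-/

open Finset

theorem div_lt_quadratic_div_linear {a b c C D M : ℝ} (ha : 0 ≤ a) (hb : 0 < b) (hc : 0 < c)
    (hC : 0 ≤ C) (hD : 0 < D) (hM : a * C < c * D * M) :
    a / D < (a + M * b + c * M ^ 2) / (D + M * C) := by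
  have hM0 : 0 < M := pos_of_mul_pos_right ((mul_nonneg ha hC).trans_lt hM) (by positivity)
  rw [div_lt_div_iff₀ hD (by positivity)]
  have hDb : 0 < M * (D * b) := by positivity
  nlinarith [mul_lt_mul_of_pos_left hM hM0]

section Network

variable {K J : Type*} [Fintype K] [DecidableEq K] [Fintype J]

theorem noise_add_interference_pos {P : K → ℝ} (hP : ∀ n, 0 ≤ P n) {σ2 : ℝ} (hσ : 0 < σ2)
    (α : K → K → ℝ) (k : K) : 0 < σ2 + ∑ n ∈ univ.erase k, P n * α n k ^ 2 := by
  have : 0 ≤ ∑ n ∈ univ.erase k, P n * α n k ^ 2 :=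
    sum_nonneg fun n _ => mul_nonneg (hP n) (sq_nonneg _)
  linarith

theorem cascaded_interference_nonneg {P : K → ℝ} (hP : ∀ n, 0 ≤ P n) (q : K → J → K → ℝ)
    (k : K) : 0 ≤ ∑ n ∈ univ.erase k, P n * ∑ j, q n j k ^ 2 :=
  sum_nonneg fun n _ => mul_nonneg (hP n) (sum_nonneg fun _ _ => sq_nonneg _)

theorem sum_sq_add_sub_sq_pos (f : J → ℝ) (i : J) {t : ℝ} (ht : 0 < t) :
    0 < ∑ j, f j ^ 2 + t - f i ^ 2 := by
  have : f i ^ 2 ≤ ∑ j, f j ^ 2 :=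
    single_le_sum (f := fun j => f j ^ 2) (fun _ _ => sq_nonneg _) (mem_univ i)
  linarith

end Network

theorem stmt_7_general
    {K J : Type*} [Fintype K] [DecidableEq K] [Fintype J]
    (P : K → ℝ) (hP : ∀ n, 0 < P n)
    (σ2 : ℝ) (hσ : 0 < σ2)
    (α : K → K → ℝ) (hα : ∀ n k, 0 < α n k)
    (q : K → J → K → ℝ) (hq : ∀ n j k, 0 < q n j k)
    (k : K) (i : J)
    (B C D : ℝ)
    (hB : B = ∑ j, (q k j k) ^ 2
      + Real.pi * Real.sqrt Real.pi * α k k / 4 * q k i k - (q k i k) ^ 2)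
    (hC : C = ∑ n ∈ Finset.univ.erase k, P n * ∑ j, (q n j k) ^ 2)
    (hD : D = σ2 + ∑ n ∈ Finset.univ.erase k, P n * (α n k) ^ 2)
    (γ : ℝ → ℝ)
    (hγ : ∀ M : ℝ, γ M =
      P k * ((α k k) ^ 2 + M * B + Real.pi ^ 2 * M ^ 2 / 16 * (q k i k) ^ 2) / (D + M * C))
    (M : ℝ)
    (hM : M > 16 * (α k k) ^ 2 * C / (Real.pi ^ 2 * (q k i k) ^ 2 * D)) :
    γ M > P k * (α k k) ^ 2 / D := by
  have hq0 := hq k i k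
  have hD0 : 0 < D := hD ▸ noise_add_interference_pos (fun n => (hP n).le) hσ α k
  have hC0 : 0 ≤ C := hC ▸ cascaded_interference_nonneg (fun n => (hP n).le) q k
  have hB0 : 0 < B := hB ▸ sum_sq_add_sub_sq_pos (q k · k) i
    (by have := hα k k; positivity)
  have hc : 0 < Real.pi ^ 2 * q k i k ^ 2 / 16 := by positivity
  have hMc : α k k ^ 2 * C < Real.pi ^ 2 * q k i k ^ 2 / 16 * D * M := by
    rw [gt_iff_lt, div_lt_iff₀ (by positivity)] at hM
    linarith
  have key := div_lt_quadratic_div_linear (sq_nonneg _) hB0 hc hC0 hD0 hMc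
  rw [hγ, gt_iff_lt, mul_div_assoc, mul_div_assoc,
    show Real.pi ^ 2 * M ^ 2 / 16 * q k i k ^ 2 = Real.pi ^ 2 * q k i k ^ 2 / 16 * M ^ 2 by ring]
  exact mul_lt_mul_of_pos_left key (hP k)

/-- Relaxed threshold condition (26): with exactly one IRS `i` associated with user `k`,
if `M > 16 α²_{k,k} C_k / (π² q²_{k,i,k} D_k)`, then the average SINR `γ(M)` of user `k`
exceeds the no-IRS benchmark SINR `γ_{k,0} = P_k α²_{k,k}/D_k`. -/
theorem stmt_7
    {K J : Type*} [Fintype K] [DecidableEq K] [Fintype J] [Nonempty J]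
    (hK : 1 < Fintype.card K)
    (P : K → ℝ) (hP : ∀ n, 0 < P n)
    (σ2 : ℝ) (hσ : 0 < σ2)
    (α : K → K → ℝ) (hα : ∀ n k, 0 < α n k)
    (q : K → J → K → ℝ) (hq : ∀ n j k, 0 < q n j k)
    (k : K) (i : J)
    (B C D : ℝ)
    (hB : B = ∑ j, (q k j k) ^ 2
      + Real.pi * Real.sqrt Real.pi * α k k / 4 * q k i k - (q k i k) ^ 2)
    (hC : C = ∑ n ∈ Finset.univ.erase k, P n * ∑ j, (q n j k) ^ 2)
    (hD : D = σ2 + ∑ n ∈ Finset.univ.erase k, P n * (α n k) ^ 2)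
    (γ : ℝ → ℝ)
    (hγ : ∀ M : ℝ, γ M =
      P k * ((α k k) ^ 2 + M * B + Real.pi ^ 2 * M ^ 2 / 16 * (q k i k) ^ 2) / (D + M * C))
    (M : ℝ)
    (hM : M > 16 * (α k k) ^ 2 * C / (Real.pi ^ 2 * (q k i k) ^ 2 * D)) :
    γ M > P k * (α k k) ^ 2 / D :=
  stmt_7_general P hP σ2 hσ α hα q hq k i B C D hB hC hD γ hγ M hM
end

section
/- Let λ_j ∈ {0,1} for j ∈ 𝒥 indicate which IRSs are associated with user k, and suppose Σ_{j∈𝒥} λ_j q_{k,j,k} > 0 (at least one IRS is associated). With M reflecting elements per IRS, the average SINR of user k is γ_k(M) = P_k·α̃²_{k,k}(λ, M) / (D_k + M·C_k), where α̃²_{k,k}(λ, M) = α²_{k,k} + M(Σ_{j∈𝒥} q²_{k,j,k} + Σ_{j∈𝒥} λ_j A_{j,k}) + (M²π²/16)(Σ_{j∈𝒥} λ_j q_{k,j,k})², A_{j,k} = (π^{3/2} α_{k,k}/4) q_{k,j,k} − q²_{k,j,k}, C_k = Σ_{n∈𝒦,n≠k} P_n Σ_{j∈𝒥} q²_{n,j,k},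 and D_k = σ² + Σ_{n∈𝒦,n≠k} P_n α²_{n,k}. If the real number M satisfies M > 16 α²_{k,k} C_k / (π² (Σ_{j∈𝒥} λ_j q_{k,j,k})² D_k), then γ_k(M) > γ_{k,0}, where γ_{k,0} = P_k α²_{k,k} / D_k is the SINR of user k in the benchmark system without IRS. (Generalized threshold condition (27) with multiple associated IRSs.) -/
/-!
Write `γ(M) = P (α² + M B + M² c) / (D + M C)` with `c = π² S² / 16`, `S = Σ_j λ_j q_{k,j,k}`.
Cross-multiplying, `γ(M) > P α² / D` reduces (for `M > 0`) to `B D + M c D > α² C`. The linear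
coefficient `B` is nonnegative because each associated IRS contributes `(π^{3/2} α/4) q > 0` in
place of `q²`, and the threshold on `M` says exactly `M c D > α² C`.
-/

open Finset

lemma sum_sq_add_sum_mul_sub_sq_nonneg {J : Type*} (s : Finset J) (l x y : J → ℝ)
    (hl : ∀ j ∈ s, l j = 0 ∨ l j = 1) (hy : ∀ j ∈ s, 0 ≤ y j) :
    0 ≤ ∑ j ∈ s, x j ^ 2 + ∑ j ∈ s, l j * (y j - x j ^ 2) := by
  rw [← sum_add_distrib]
  refine sum_nonneg fun j hj => ?_
  rcases hl j hj with h | h <;> simp [h, sq_nonneg, hy j hj]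

lemma div_lt_div_quadratic_linear {p a b c C D M : ℝ} (hp : 0 < p) (ha : 0 ≤ a) (hb : 0 ≤ b)
    (hc : 0 < c) (hC : 0 ≤ C) (hD : 0 < D) (hM : a * C < M * c * D) :
    p * a / D < p * (a + M * b + M ^ 2 * c) / (D + M * C) := by
  have hM0 : 0 < M := by
    by_contra! h
    nlinarith [mul_nonneg ha hC, mul_nonneg (mul_nonneg (neg_nonneg.mpr h) hc.le) hD.le]
  rw [div_lt_div_iff₀ hD (by positivity)]
  have gain : M * (a * C) < M * (b * D + M * c * D) := by
    nlinarith [mul_nonneg hb hD.le]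
  nlinarith [mul_lt_mul_of_pos_left gain hp]

theorem stmt_8_general
    {K J : Type*} [Fintype K] [DecidableEq K] [Fintype J]
    (P : K → ℝ) (hP : ∀ n, 0 < P n)
    (σ2 : ℝ) (hσ : 0 < σ2)
    (α : K → K → ℝ) (hα : ∀ n k, 0 < α n k)
    (q : K → J → K → ℝ) (hq : ∀ n j k, 0 < q n j k)
    (k : K)
    (lam : J → ℝ) (hlam : ∀ j, lam j = 0 ∨ lam j = 1)
    (hassoc : 0 < ∑ j, lam j * q k j k)
    (C D : ℝ)
    (hC : C = ∑ n ∈ Finset.univ.erase k, P n * ∑ j, (q n j k) ^ 2)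
    (hD : D = σ2 + ∑ n ∈ Finset.univ.erase k, P n * (α n k) ^ 2)
    (γ : ℝ → ℝ)
    (hγ : ∀ M : ℝ, γ M =
      P k * ((α k k) ^ 2
        + M * (∑ j, (q k j k) ^ 2
          + ∑ j, lam j * (Real.pi * Real.sqrt Real.pi * α k k / 4 * q k j k - (q k j k) ^ 2))
        + M ^ 2 * Real.pi ^ 2 / 16 * (∑ j, lam j * q k j k) ^ 2) / (D + M * C))
    (M : ℝ)
    (hM : M > 16 * (α k k) ^ 2 * C / (Real.pi ^ 2 * (∑ j, lam j * q k j k) ^ 2 * D)) :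
    γ M > P k * (α k k) ^ 2 / D := by
  set S := ∑ j, lam j * q k j k
  have hD0 : 0 < D := by
    rw [hD]
    have := sum_nonneg fun n (_ : n ∈ univ.erase k) => mul_nonneg (hP n).le (sq_nonneg (α n k))
    linarith
  have hC0 : 0 ≤ C := hC ▸ sum_nonneg fun n _ =>
    mul_nonneg (hP n).le (sum_nonneg fun j _ => sq_nonneg (q n j k))
  have hB := sum_sq_add_sum_mul_sub_sq_nonneg univ lam (fun j => q k j k)
    (fun j => Real.pi * Real.sqrt Real.pi * α k k / 4 * q k j k) (fun j _ => hlam j)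
    (fun j _ => by have := hα k k; have := hq k j k; positivity)
  have hthreshold : α k k ^ 2 * C < M * (Real.pi ^ 2 / 16 * S ^ 2) * D := by
    rw [gt_iff_lt, div_lt_iff₀ (by positivity)] at hM
    linarith
  rw [hγ M]
  convert div_lt_div_quadratic_linear (hP k) (sq_nonneg _) hB (by positivity) hC0 hD0
    hthreshold using 3
  ring

/-- Generalized threshold condition (27) with multiple associated IRSs: if a binary
association vector `lam` with `Σ_j lam_j q_{k,j,k} > 0` is used for user `k` and
`M > 16 α²_{k,k} C_k / (π² (Σ_j lam_j q_{k,j,k})² D_k)`, then the average SINR `γ(M)`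
of user `k` exceeds the no-IRS benchmark SINR `γ_{k,0} = P_k α²_{k,k}/D_k`. -/
theorem stmt_8
    {K J : Type*} [Fintype K] [DecidableEq K] [Fintype J] [Nonempty J]
    (hK : 1 < Fintype.card K)
    (P : K → ℝ) (hP : ∀ n, 0 < P n)
    (σ2 : ℝ) (hσ : 0 < σ2)
    (α : K → K → ℝ) (hα : ∀ n k, 0 < α n k)
    (q : K → J → K → ℝ) (hq : ∀ n j k, 0 < q n j k)
    (k : K)
    (lam : J → ℝ) (hlam : ∀ j, lam j = 0 ∨ lam j = 1)
    (hassoc : 0 < ∑ j, lam j * q k j k)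
    (C D : ℝ)
    (hC : C = ∑ n ∈ Finset.univ.erase k, P n * ∑ j, (q n j k) ^ 2)
    (hD : D = σ2 + ∑ n ∈ Finset.univ.erase k, P n * (α n k) ^ 2)
    (γ : ℝ → ℝ)
    (hγ : ∀ M : ℝ, γ M =
      P k * ((α k k) ^ 2
        + M * (∑ j, (q k j k) ^ 2
          + ∑ j, lam j * (Real.pi * Real.sqrt Real.pi * α k k / 4 * q k j k - (q k j k) ^ 2))
        + M ^ 2 * Real.pi ^ 2 / 16 * (∑ j, lam j * q k j k) ^ 2) / (D + M * C))
    (M : ℝ)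
    (hM : M > 16 * (α k k) ^ 2 * C / (Real.pi ^ 2 * (∑ j, lam j * q k j k) ^ 2 * D)) :
    γ M > P k * (α k k) ^ 2 / D :=
  stmt_8_general P hP σ2 hσ α hα q hq k lam hlam hassoc C D hC hD γ hγ M hM
end

section
/- Suppose all BSs transmit at the common power P_max > 0 and the number of IRSs satisfies J ≥ K, where J = |𝒥| and K = |𝒦|. An IRS-user association is a matrix Λ = (λ_{j,k}) with λ_{j,k} ∈ {0,1} and Σ_{k∈𝒦} λ_{j,k} ≤ 1 for each j ∈ 𝒥, and under Λ the SINR of user k with M reflecting elements per IRS is γ_k(Λ, M) = P_max·α̃²_{k,k}(λ_{·,k}, M) / (σ² + P_max Σ_{n∈𝒦,n≠k}(α²_{n,k} + M Σ_{j∈𝒥} q²_{n,j,k})). Let q²_{k,min} = min_{i∈𝒥} q²_{k,i,k}, and let γ_0 = min_{k∈𝒦} P_max α²_{k,k}/(σ² + P_max Σ_{n∈𝒦,n≠k} α²_{n,k}) be the network common SINR without IRS. If the real number M satisfies M > (16/(π² ⌊J/K⌋²))·max_{k∈𝒦} [ α²_{k,k} P_max Σ_{n∈𝒦,n≠k} Σ_{j∈𝒥}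 q²_{n,j,k} / ( q²_{k,min} (σ² + P_max Σ_{n∈𝒦,n≠k} α²_{n,k}) ) ], then there exists a feasible association Λ with min_{k∈𝒦} γ_k(Λ, M) > γ_0; in particular, the maximum of min_{k∈𝒦} γ_k(Λ, M) over all feasible associations Λ is strictly greater than γ_0. (Proposition 4.) -/
/-!
Give every user `⌊J/K⌋` IRSs of its own, via an injection `𝒦 × Fin ⌊J/K⌋ ↪ 𝒥`. The
interference term `M Σ q²` does not depend on the association, while the coherent term
`(M²π²/16)(Σⱼ λⱼ q_{k,j,k})²` of user `k` is at least `(M²π²/16) ⌊J/K⌋² q²_{k,min}`. After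
cross-multiplying, `γ_k > P α²_{k,k} / D₀` reduces (the term linear in `M` being nonnegative)
to `α²_{k,k} P Q < M (π²/16) ⌊J/K⌋² q²_{k,min} D₀`, where `D₀ = σ² + P Σ_{n≠k} α²_{n,k}` and
`Q = Σ_{n≠k} Σⱼ q²_{n,j,k}`; this is the assumed bound on `M`.
-/

open Finset

section Association

variable {K J ι : Type*} [Fintype ι] [DecidableEq J]

def embeddingAssociation (f : K × ι ↪ J) (j : J) (k : K) : ℝ :=
  if j ∈ univ.image (fun i => f (k, i)) then 1 else 0

variable (f : K × ι ↪ J)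

theorem embeddingAssociation_eq_zero_or_one (j : J) (k : K) :
    embeddingAssociation f j k = 0 ∨ embeddingAssociation f j k = 1 := by
  unfold embeddingAssociation
  split_ifs <;> simp

theorem sum_embeddingAssociation_le_one [Fintype K] (j : J) :
    ∑ k, embeddingAssociation f j k ≤ 1 := by
  simp only [embeddingAssociation, sum_boole, Nat.cast_le_one]
  refine card_le_one.2 fun k hk k' hk' => ?_
  simp only [mem_filter, mem_univ, mem_image, true_and] at hk hk'
  obtain ⟨i, rfl⟩ := hk
  obtain ⟨i', hi'⟩ := hk'
  exact congrArg Prod.fst (f.injective hi'.symm)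

theorem sum_embeddingAssociation_mul [Fintype J] (k : K) (g : J → ℝ) :
    ∑ j, embeddingAssociation f j k * g j = ∑ i, g (f (k, i)) := by
  simp only [embeddingAssociation, boole_mul]
  rw [sum_ite_mem, univ_inter, sum_image fun i _ i' _ h => congrArg Prod.snd (f.injective h)]

theorem card_mul_le_sum_embeddingAssociation_mul [Fintype J] (k : K) {g : J → ℝ} {c : ℝ}
    (hc : ∀ j, c ≤ g j) : Fintype.card ι * c ≤ ∑ j, embeddingAssociation f j k * g j := by
  rw [sum_embeddingAssociation_mul]
  simpa using card_nsmul_le_sum univ (fun i => g (f (k, i))) c fun i _ => hc _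

end Association

theorem sum_sq_add_sum_mul_sub_sq_nonneg_s9 {J : Type*} [Fintype J] {Λ g : J → ℝ} {c : ℝ}
    (hΛ : ∀ j, Λ j = 0 ∨ Λ j = 1) (hc : 0 ≤ c) (hg : ∀ j, 0 ≤ g j) :
    0 ≤ ∑ j, g j ^ 2 + ∑ j, Λ j * (c * g j - g j ^ 2) := by
  rw [← sum_add_distrib]
  refine sum_nonneg fun j _ => ?_
  rcases hΛ j with h | h <;> simp only [h] <;> nlinarith [hg j]

theorem div_lt_div_of_gain {P a D Q L B M : ℝ} (hP : 0 < P) (hD : 0 < D) (ha : 0 ≤ a)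
    (hQ : 0 ≤ Q) (hL : 0 ≤ L) (hB : 0 ≤ B) (hgain : a * P * Q < M * B * D) :
    P * a / D < P * (a + M * L + M ^ 2 * B) / (D + P * (M * Q)) := by
  have hM : 0 < M := by
    by_contra! hM
    nlinarith [mul_nonneg (mul_nonneg ha hP.le) hQ,
      mul_nonneg (mul_nonneg hB hD.le) (neg_nonneg.2 hM)]
  rw [div_lt_div_iff₀ hD (by positivity)]
  nlinarith [mul_lt_mul_of_pos_left hgain (mul_pos hP hM),
    mul_nonneg (mul_nonneg hP.le hM.le) (mul_nonneg hL hD.le)]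

theorem lt_gain_of_threshold_lt {a r D m R M : ℝ} (ha : 0 ≤ a) (hm : 0 < m) (hr : 0 < r)
    (hD : 0 < D) (hR : m ^ 2 * r ≤ R ^ 2) (h : 16 / (Real.pi ^ 2 * m ^ 2) * (a / (r * D)) < M) :
    a < M * (Real.pi ^ 2 / 16 * R ^ 2) * D := by
  have hpos : 0 < Real.pi ^ 2 / 16 * m ^ 2 * r * D := by positivity
  have hthr : 16 / (Real.pi ^ 2 * m ^ 2) * (a / (r * D))
      = a / (Real.pi ^ 2 / 16 * m ^ 2 * r * D) := by
    field_simp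
  rw [hthr, div_lt_iff₀ hpos] at h
  have hM : 0 < M := pos_of_mul_pos_left (ha.trans_lt h) hpos.le
  calc a < M * (Real.pi ^ 2 / 16 * m ^ 2 * r * D) := h
    _ = M * (Real.pi ^ 2 / 16 * (m ^ 2 * r)) * D := by ring
    _ ≤ M * (Real.pi ^ 2 / 16 * R ^ 2) * D := by gcongr

theorem benchmark_sinr_lt_sinr_embeddingAssociation {K J : Type*} [Fintype K] [DecidableEq K]
    [Fintype J] [DecidableEq J] {m : ℕ} (hm : 0 < m) (f : K × Fin m ↪ J) {Pmax σ2 M : ℝ}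
    (hP : 0 < Pmax) (hσ : 0 < σ2) {α : K → K → ℝ} {q : K → J → K → ℝ} (k : K)
    (hα : 0 ≤ α k k) (hq : ∀ j, 0 < q k j k)
    (hM : 16 / (Real.pi ^ 2 * (m : ℝ) ^ 2)
      * ((α k k) ^ 2 * Pmax * (∑ n ∈ univ.erase k, ∑ j, (q n j k) ^ 2)
        / ((⨅ i : J, (q k i k) ^ 2) * (σ2 + Pmax * ∑ n ∈ univ.erase k, (α n k) ^ 2))) < M) :
    Pmax * (α k k) ^ 2 / (σ2 + Pmax * ∑ n ∈ univ.erase k, (α n k) ^ 2) <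
      Pmax * ((α k k) ^ 2
        + M * (∑ j, (q k j k) ^ 2 + ∑ j, embeddingAssociation f j k
            * (Real.pi * Real.sqrt Real.pi * α k k / 4 * q k j k - (q k j k) ^ 2))
        + M ^ 2 * Real.pi ^ 2 / 16 * (∑ j, embeddingAssociation f j k * q k j k) ^ 2)
      / (σ2 + Pmax * ∑ n ∈ univ.erase k, ((α n k) ^ 2 + M * ∑ j, (q n j k) ^ 2)) := by
  set R := ∑ j, embeddingAssociation f j k * q k j k
  set D := σ2 + Pmax * ∑ n ∈ univ.erase k, (α n k) ^ 2
  set Q := ∑ n ∈ univ.erase k, ∑ j, (q n j k) ^ 2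
  have hD : 0 < D := by positivity
  have : Nonempty J := ⟨f (k, ⟨0, hm⟩)⟩
  obtain ⟨j₀, hj₀⟩ := exists_eq_ciInf_of_finite (f := fun i => (q k i k) ^ 2)
  have hmin : ∀ j, q k j₀ k ≤ q k j k := fun j =>
    (pow_le_pow_iff_left₀ (hq j₀).le (hq j).le two_ne_zero).1
      (hj₀ ▸ ciInf_le (Finite.bddBelow_range _) j)
  have hR : (m : ℝ) ^ 2 * (⨅ i, (q k i k) ^ 2) ≤ R ^ 2 := by
    have hsum := card_mul_le_sum_embeddingAssociation_mul f k hmin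
    rw [Fintype.card_fin] at hsum
    rw [← hj₀, ← mul_pow]
    exact pow_le_pow_left₀ (mul_pos (by exact_mod_cast hm) (hq j₀)).le hsum 2
  have hgain := lt_gain_of_threshold_lt (by positivity) (by exact_mod_cast hm)
    (hj₀ ▸ pow_pos (hq j₀) 2) hD hR hM
  have hden : σ2 + Pmax * ∑ n ∈ univ.erase k, ((α n k) ^ 2 + M * ∑ j, (q n j k) ^ 2)
      = D + Pmax * (M * Q) := by
    simp only [D, Q, sum_add_distrib, ← mul_sum]
    ring
  rw [hden, show M ^ 2 * Real.pi ^ 2 / 16 * R ^ 2 = M ^ 2 * (Real.pi ^ 2 / 16 * R ^ 2) by ring]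
  exact div_lt_div_of_gain hP hD (sq_nonneg _) (by positivity)
    (sum_sq_add_sum_mul_sub_sq_nonneg_s9 (embeddingAssociation_eq_zero_or_one f · k)
      (by positivity) fun j => (hq j).le) (by positivity) hgain

theorem stmt_9_general
    {K J : Type*} [Fintype K] [DecidableEq K] [Nonempty K] [Fintype J]
    (hJK : Fintype.card K ≤ Fintype.card J)
    (Pmax σ2 : ℝ) (hP : 0 < Pmax) (hσ : 0 < σ2)
    (α : K → K → ℝ) (hα : ∀ n k, 0 < α n k)
    (q : K → J → K → ℝ) (hq : ∀ n j k, 0 < q n j k)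
    (γ : (J → K → ℝ) → ℝ → K → ℝ)
    (hγ : ∀ (Λ : J → K → ℝ) (M : ℝ) (k : K), γ Λ M k =
      Pmax * ((α k k) ^ 2
        + M * (∑ j, (q k j k) ^ 2
          + ∑ j, Λ j k * (Real.pi * Real.sqrt Real.pi * α k k / 4 * q k j k - (q k j k) ^ 2))
        + M ^ 2 * Real.pi ^ 2 / 16 * (∑ j, Λ j k * q k j k) ^ 2)
      / (σ2 + Pmax * ∑ n ∈ Finset.univ.erase k, ((α n k) ^ 2 + M * ∑ j, (q n j k) ^ 2)))
    (γ0 : ℝ)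
    (hγ0 : γ0 = ⨅ k : K,
      Pmax * (α k k) ^ 2 / (σ2 + Pmax * ∑ n ∈ Finset.univ.erase k, (α n k) ^ 2))
    (M : ℝ)
    (hM : M > 16 / (Real.pi ^ 2 * ((Fintype.card J / Fintype.card K : ℕ) : ℝ) ^ 2)
      * ⨆ k : K, (α k k) ^ 2 * Pmax * (∑ n ∈ Finset.univ.erase k, ∑ j, (q n j k) ^ 2)
        / ((⨅ i : J, (q k i k) ^ 2)
          * (σ2 + Pmax * ∑ n ∈ Finset.univ.erase k, (α n k) ^ 2))) :
    ∃ Λ : J → K → ℝ,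
      (∀ j k, Λ j k = 0 ∨ Λ j k = 1) ∧ (∀ j, ∑ k, Λ j k ≤ 1) ∧
      (⨅ k : K, γ Λ M k) > γ0 := by
  classical
  set m := Fintype.card J / Fintype.card K
  have hm : 0 < m := Nat.div_pos hJK Fintype.card_pos
  obtain ⟨f⟩ : Nonempty (K × Fin m ↪ J) := Function.Embedding.nonempty_of_card_le <| by
    rw [Fintype.card_prod, Fintype.card_fin, mul_comm]
    exact Nat.div_mul_le_self _ _
  refine ⟨embeddingAssociation f, embeddingAssociation_eq_zero_or_one f,
    sum_embeddingAssociation_le_one f, ?_⟩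
  obtain ⟨k, hk⟩ := exists_eq_ciInf_of_finite (f := γ (embeddingAssociation f) M)
  rw [← hk, hγ0, hγ]
  refine (ciInf_le (Finite.bddBelow_range _) k).trans_lt ?_
  refine benchmark_sinr_lt_sinr_embeddingAssociation hm f hP hσ k (hα k k).le (hq k · k) ?_
  exact (mul_le_mul_of_nonneg_left (le_ciSup (Finite.bddAbove_range _) k)
    (by positivity)).trans_lt hM

/-- Proposition 4: if `J ≥ K` and the number of reflecting elements per IRS satisfies
`M > (16/(π² ⌊J/K⌋²)) · max_k [α²_{k,k} P_max Σ_{n≠k} Σ_j q²_{n,j,k} /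
(q²_{k,min} (σ² + P_max Σ_{n≠k} α²_{n,k}))]`, then there exists a feasible IRS-user
association `Λ` whose network common SINR `min_k γ_k(Λ, M)` strictly exceeds the
network common SINR `γ₀` of the no-IRS benchmark system. -/
theorem stmt_9
    {K J : Type*} [Fintype K] [DecidableEq K] [Nonempty K] [Fintype J] [Nonempty J]
    (hK : 1 < Fintype.card K)
    (hJK : Fintype.card K ≤ Fintype.card J)
    (Pmax σ2 : ℝ) (hP : 0 < Pmax) (hσ : 0 < σ2)
    (α : K → K → ℝ) (hα : ∀ n k, 0 < α n k)
    (q : K → J → K → ℝ) (hq : ∀ n j k, 0 < q n j k)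
    (γ : (J → K → ℝ) → ℝ → K → ℝ)
    (hγ : ∀ (Λ : J → K → ℝ) (M : ℝ) (k : K), γ Λ M k =
      Pmax * ((α k k) ^ 2
        + M * (∑ j, (q k j k) ^ 2
          + ∑ j, Λ j k * (Real.pi * Real.sqrt Real.pi * α k k / 4 * q k j k - (q k j k) ^ 2))
        + M ^ 2 * Real.pi ^ 2 / 16 * (∑ j, Λ j k * q k j k) ^ 2)
      / (σ2 + Pmax * ∑ n ∈ Finset.univ.erase k, ((α n k) ^ 2 + M * ∑ j, (q n j k) ^ 2)))
    (γ0 : ℝ)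
    (hγ0 : γ0 = ⨅ k : K,
      Pmax * (α k k) ^ 2 / (σ2 + Pmax * ∑ n ∈ Finset.univ.erase k, (α n k) ^ 2))
    (M : ℝ)
    (hM : M > 16 / (Real.pi ^ 2 * ((Fintype.card J / Fintype.card K : ℕ) : ℝ) ^ 2)
      * ⨆ k : K, (α k k) ^ 2 * Pmax * (∑ n ∈ Finset.univ.erase k, ∑ j, (q n j k) ^ 2)
        / ((⨅ i : J, (q k i k) ^ 2)
          * (σ2 + Pmax * ∑ n ∈ Finset.univ.erase k, (α n k) ^ 2))) :
    ∃ Λ : J → K → ℝ,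
      (∀ j k, Λ j k = 0 ∨ Λ j k = 1) ∧ (∀ j, ∑ k, Λ j k ≤ 1) ∧
      (⨅ k : K, γ Λ M k) > γ0 :=
  stmt_9_general hJK Pmax σ2 hP hσ α hα q hq γ hγ γ0 hγ0 M hM
end

section
/- Fix a user k ∈ 𝒦, an IRS j₀ ∈ 𝒥, a real number M ≥ 2, and an association vector λ ∈ {0,1}^𝒥 with λ_{j₀} = 0. Let λ' be obtained from λ by setting λ'_{j₀} = 1 (and λ'_j = λ_j for j ≠ j₀). Then α̃²_{k,k}(λ', M) > α̃²_{k,k}(λ, M). Consequently, since the interference-plus-noise term σ² + Σ_{n∈𝒦,n≠k} P_n(α²_{n,k} + M Σ_{j∈𝒥} q²_{n,j,k}) does not depend on the association, assigning an IRS from user k' to user k strictly increases the SINR of user k and strictly decreases the SINR of user k'. (Proposition 5.) -/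
/-!
Associating IRS `j₀` with user `k` adds `M (π^{3/2} α_{k,k}/4 · q - q²)` to the linear part of
`α̃²_{k,k}` and `c ((S + q)² - S²)` to the quadratic part, where `q = q_{k,j₀,k}`,
`S = Σ_j λ_j q_{k,j,k} ≥ 0` and `c = M²π²/16`. For `M ≥ 2` we have `c > M` because `π² > 9`,
so the coherent gain `c q²` outweighs the loss `M q²` and the total increment is positive.
The interference-plus-noise term does not depend on the association, so the SINR moves with
`α̃²_{k,k}`; removing `j₀` from `k'` is the same step read backwards.
-/

open Finset Function Real

theorem sum_update_mul {ι R : Type*} [Fintype ι] [DecidableEq ι] [CommRing R]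
    (f w : ι → R) (i : ι) (b : R) :
    ∑ j, update f i b j * w j = ∑ j, f j * w j + (b - f i) * w i := by
  rw [← sum_erase_add _ _ (mem_univ i), ← sum_erase_add _ (fun j ↦ f j * w j) (mem_univ i),
    sum_congr rfl fun j hj ↦ by rw [update_of_ne (ne_of_mem_erase hj)], update_self]
  ring

/-- `α̃²(λ, M)` of a user with direct gain `a` and cascaded gains `q j` through the IRSs `j`. -/
noncomputable def effChannelPower {J : Type*} [Fintype J] (M a : ℝ) (q lam : J → ℝ) : ℝ :=
  a ^ 2 + M * (∑ j, q j ^ 2 + ∑ j, lam j * (π * √π * a / 4 * q j - q j ^ 2))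
    + M ^ 2 * π ^ 2 / 16 * (∑ j, lam j * q j) ^ 2

lemma lt_sq_mul_pi_sq_div_sixteen {M : ℝ} (hM : 2 ≤ M) : M < M ^ 2 * π ^ 2 / 16 := by
  have hπ : 9 < π ^ 2 := by nlinarith [pi_gt_three]
  nlinarith

lemma effChannelPower_lt_update_one {J : Type*} [Fintype J] [DecidableEq J] {M a : ℝ}
    {q lam : J → ℝ} {j₀ : J} (hM : 2 ≤ M) (ha : 0 ≤ a) (hq : ∀ j, 0 ≤ q j) (hq₀ : 0 < q j₀)
    (hlam : ∀ j, 0 ≤ lam j) (hlam₀ : lam j₀ = 0) :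
    effChannelPower M a q lam < effChannelPower M a q (update lam j₀ 1) := by
  set c := M ^ 2 * π ^ 2 / 16
  set S := ∑ j, lam j * q j
  have hS : 0 ≤ S := sum_nonneg fun j _ ↦ mul_nonneg (hlam j) (hq j)
  have hlinear : 0 ≤ M * (π * √π * a / 4 * q j₀) := by
    have : 0 ≤ M := by linarith
    positivity
  have hcoherent : 0 < (c - M) * q j₀ ^ 2 :=
    mul_pos (sub_pos.2 (lt_sq_mul_pi_sq_div_sixteen hM)) (pow_pos hq₀ 2)
  have hcross : 0 ≤ c * (2 * S * q j₀) := by positivity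
  simp only [effChannelPower, sum_update_mul, hlam₀]
  linear_combination hlinear + hcoherent + hcross

theorem stmt_12_general
    {K J : Type*} [Fintype K] [DecidableEq K] [Fintype J] [DecidableEq J]
    (P : K → ℝ) (hP : ∀ n, 0 < P n)
    (σ2 : ℝ) (hσ : 0 < σ2)
    (α : K → K → ℝ) (hα : ∀ n k, 0 < α n k)
    (q : K → J → K → ℝ) (hq : ∀ n j k, 0 < q n j k)
    (k k' : K) (j0 : J) (M : ℝ) (hM : 2 ≤ M)
    (lam : J → ℝ) (hlam : ∀ j, lam j = 0 ∨ lam j = 1) (hlam0 : lam j0 = 0)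
    (mu : J → ℝ) (hmu : ∀ j, mu j = 0 ∨ mu j = 1) (hmu1 : mu j0 = 1)
    (effCh : K → (J → ℝ) → ℝ)
    (heff : ∀ (u : K) (lamv : J → ℝ), effCh u lamv =
      (α u u) ^ 2
      + M * (∑ j, (q u j u) ^ 2
        + ∑ j, lamv j * (Real.pi * Real.sqrt Real.pi * α u u / 4 * q u j u - (q u j u) ^ 2))
      + M ^ 2 * Real.pi ^ 2 / 16 * (∑ j, lamv j * q u j u) ^ 2)
    (γ : K → (J → ℝ) → ℝ)
    (hγ : ∀ (u : K) (lamv : J → ℝ), γ u lamv =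
      P u * effCh u lamv
      / (σ2 + ∑ n ∈ Finset.univ.erase u, P n * ((α n u) ^ 2 + M * ∑ j, (q n j u) ^ 2))) :
    effCh k (Function.update lam j0 1) > effCh k lam ∧
    γ k (Function.update lam j0 1) > γ k lam ∧
    γ k' (Function.update mu j0 0) < γ k' mu := by
  have binary_nonneg {x : ℝ} (hx : x = 0 ∨ x = 1) : 0 ≤ x := by rcases hx with rfl | rfl <;> norm_num
  have heff_lt (u : K) (lv : J → ℝ) (hlv : ∀ j, 0 ≤ lv j) (h0 : lv j0 = 0) :
      effCh u lv < effCh u (update lv j0 1) := by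
    rw [heff, heff]
    exact effChannelPower_lt_update_one hM (hα u u).le (fun j ↦ (hq u j u).le) (hq u j0 u) hlv h0
  have hγ_lt (u : K) (lv : J → ℝ) (hlv : ∀ j, 0 ≤ lv j) (h0 : lv j0 = 0) :
      γ u lv < γ u (update lv j0 1) := by
    have hinterference : 0 ≤ ∑ n ∈ univ.erase u, P n * (α n u ^ 2 + M * ∑ j, q n j u ^ 2) :=
      sum_nonneg fun n _ ↦ mul_nonneg (hP n).le <| add_nonneg (sq_nonneg _) <|
        mul_nonneg (by linarith) (sum_nonneg fun j _ ↦ sq_nonneg _)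
    rw [hγ, hγ]
    exact div_lt_div_of_pos_right (mul_lt_mul_of_pos_left (heff_lt u lv hlv h0) (hP u))
      (by linarith)
  have hmu_removed : ∀ j, 0 ≤ update mu j0 0 j :=
    (forall_update_iff mu fun _ x ↦ 0 ≤ x).2 ⟨le_rfl, fun j _ ↦ binary_nonneg (hmu j)⟩
  refine ⟨heff_lt k lam (fun j ↦ binary_nonneg (hlam j)) hlam0,
    hγ_lt k lam (fun j ↦ binary_nonneg (hlam j)) hlam0, ?_⟩
  have hmu_restored : update (update mu j0 0) j0 1 = mu := by
    rw [update_idem, ← hmu1, update_eq_self]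
  simpa only [hmu_restored] using hγ_lt k' _ hmu_removed (update_self j0 0 mu)

/-- Proposition 5: for `M ≥ 2`, associating one additional IRS `j₀` with user `k`
strictly increases its effective channel power `α̃²_{k,k}`, hence (since the
interference-plus-noise term does not depend on the association) strictly increases
the SINR of user `k`; correspondingly, removing IRS `j₀` from user `k'` strictly
decreases the SINR of user `k'`. -/
theorem stmt_12
    {K J : Type*} [Fintype K] [DecidableEq K] [Fintype J] [DecidableEq J] [Nonempty J]
    (hK : 1 < Fintype.card K)
    (P : K → ℝ) (hP : ∀ n, 0 < P n)
    (σ2 : ℝ) (hσ : 0 < σ2)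
    (α : K → K → ℝ) (hα : ∀ n k, 0 < α n k)
    (q : K → J → K → ℝ) (hq : ∀ n j k, 0 < q n j k)
    (k k' : K) (hkk' : k ≠ k') (j0 : J) (M : ℝ) (hM : 2 ≤ M)
    (lam : J → ℝ) (hlam : ∀ j, lam j = 0 ∨ lam j = 1) (hlam0 : lam j0 = 0)
    (mu : J → ℝ) (hmu : ∀ j, mu j = 0 ∨ mu j = 1) (hmu1 : mu j0 = 1)
    (effCh : K → (J → ℝ) → ℝ)
    (heff : ∀ (u : K) (lamv : J → ℝ), effCh u lamv =
      (α u u) ^ 2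
      + M * (∑ j, (q u j u) ^ 2
        + ∑ j, lamv j * (Real.pi * Real.sqrt Real.pi * α u u / 4 * q u j u - (q u j u) ^ 2))
      + M ^ 2 * Real.pi ^ 2 / 16 * (∑ j, lamv j * q u j u) ^ 2)
    (γ : K → (J → ℝ) → ℝ)
    (hγ : ∀ (u : K) (lamv : J → ℝ), γ u lamv =
      P u * effCh u lamv
      / (σ2 + ∑ n ∈ Finset.univ.erase u, P n * ((α n u) ^ 2 + M * ∑ j, (q n j u) ^ 2))) :
    effCh k (Function.update lam j0 1) > effCh k lam ∧
    γ k (Function.update lam j0 1) > γ k lam ∧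
    γ k' (Function.update mu j0 0) < γ k' mu :=
  stmt_12_general P hP σ2 hσ α hα q hq k k' j0 M hM lam hlam hlam0 mu hmu hmu1 effCh heff γ hγ
end

section
/- For each user k ∈ 𝒦 and positive power vector P = (P_n)_{n∈𝒦}, define γ_k(Λ, P) = P_k·α̃²_{k,k}(λ_{·,k}, M) / (σ² + Σ_{n∈𝒦,n≠k} P_n ν²_{n,k}), where ν²_{n,k} = α²_{n,k} + M Σ_{j∈𝒥} q²_{n,j,k} does not depend on the association Λ. Let Λ¹, Λ² be two IRS-user associations and P¹ a positive power vector. If γ_k(Λ², P¹) > γ_k(Λ¹, P¹) for every k ∈ 𝒦, then α̃²_{k,k}(λ²_{·,k}, M) > α̃²_{k,k}(λ¹_{·,k}, M) for every k ∈ 𝒦, and consequently, for every positive power vector P⁰, γ_k(Λ², P⁰) > γ_k(Λ¹, P⁰) for every k ∈ 𝒦 (hence min_{k∈𝒦} γ_k(Λ², P⁰) > min_{k∈𝒦} γ_k(Λ¹, P⁰)). (Key claim of Appendix A, which implies Proposition 1: the alternating-optimization algorithm for (P2) terminates with the IRS-user associations updated at most once.) -/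
/-!
The interference-plus-noise power in the denominator of `γ_k` does not depend on the
IRS-user association, and it is positive. Hence, for any positive power vector, comparing
the SINRs of user `k` under two associations is the same as comparing its effective channel
powers, a quantity independent of the powers. Dominance under `P¹` therefore transfers to
every `P⁰`, and pointwise strict dominance over the finite user set passes to the minimum.
-/

open Finset

lemma add_sum_mul_pos {ι : Type*} (s : Finset ι) {σ2 : ℝ} (hσ : 0 < σ2) {P c : ι → ℝ}
    (hP : ∀ n, 0 ≤ P n) (hc : ∀ n, 0 ≤ c n) : 0 < σ2 + ∑ n ∈ s, P n * c n :=
  add_pos_of_pos_of_nonneg hσ (sum_nonneg fun n _ => mul_nonneg (hP n) (hc n))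

lemma mul_div_lt_mul_div_iff {p d x y : ℝ} (hp : 0 < p) (hd : 0 < d) :
    p * x / d < p * y / d ↔ x < y := by
  rw [div_lt_div_iff_of_pos_right hd, mul_lt_mul_iff_right₀ hp]

lemma ciInf_lt_ciInf_of_lt {ι α : Type*} [Finite ι] [Nonempty ι]
    [ConditionallyCompleteLinearOrder α] {f g : ι → α} (h : ∀ i, f i < g i) :
    ⨅ i, f i < ⨅ i, g i := by
  obtain ⟨i, hi⟩ := exists_eq_ciInf_of_finite (f := g)
  rw [← hi]
  exact (ciInf_le (Set.finite_range f).bddBelow i).trans_lt (h i)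

theorem stmt_14_general
    {K J : Type*} [Fintype K] [DecidableEq K] [Nonempty K] [Fintype J]
    (σ2 : ℝ) (hσ : 0 < σ2)
    (α : K → K → ℝ)
    (q : K → J → K → ℝ)
    (M : ℝ) (hM : 0 < M)
    (effCh : K → (J → ℝ) → ℝ)
    (γ : (J → K → ℝ) → (K → ℝ) → K → ℝ)
    (hγ : ∀ (Λ : J → K → ℝ) (P : K → ℝ) (u : K), γ Λ P u =
      P u * effCh u (fun j => Λ j u)
      / (σ2 + ∑ n ∈ Finset.univ.erase u, P n * ((α n u) ^ 2 + M * ∑ j, (q n j u) ^ 2)))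
    (Λ1 Λ2 : J → K → ℝ)
    (P1 : K → ℝ) (hP1 : ∀ u, 0 < P1 u)
    (hdom : ∀ u : K, γ Λ2 P1 u > γ Λ1 P1 u) :
    (∀ u : K, effCh u (fun j => Λ2 j u) > effCh u (fun j => Λ1 j u)) ∧
    (∀ P0 : K → ℝ, (∀ u, 0 < P0 u) →
      (∀ u : K, γ Λ2 P0 u > γ Λ1 P0 u) ∧
      (⨅ u : K, γ Λ2 P0 u) > ⨅ u : K, γ Λ1 P0 u) := by
  have hγ_lt_iff : ∀ P : K → ℝ, (∀ u, 0 < P u) → ∀ u,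
      γ Λ1 P u < γ Λ2 P u ↔ effCh u (fun j => Λ1 j u) < effCh u (fun j => Λ2 j u) := by
    intro P hP u
    rw [hγ, hγ]
    exact mul_div_lt_mul_div_iff (hP u)
      (add_sum_mul_pos _ hσ (fun n => (hP n).le) fun n => by positivity)
  have hgain : ∀ u, effCh u (fun j => Λ2 j u) > effCh u (fun j => Λ1 j u) :=
    fun u => (hγ_lt_iff P1 hP1 u).1 (hdom u)
  refine ⟨hgain, fun P0 hP0 => ?_⟩
  have hγ0 : ∀ u, γ Λ2 P0 u > γ Λ1 P0 u := fun u => (hγ_lt_iff P0 hP0 u).2 (hgain u)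
  exact ⟨hγ0, ciInf_lt_ciInf_of_lt hγ0⟩

/-- Key claim of Appendix A (implying Proposition 1): if under some positive power vector
`P¹` every user's SINR is strictly larger under association `Λ²` than under `Λ¹`, then
every user's effective channel power is strictly larger under `Λ²`, and consequently the
same strict SINR dominance (hence dominance of the network common SINR) holds under
every positive power vector `P⁰`. -/
theorem stmt_14
    {K J : Type*} [Fintype K] [DecidableEq K] [Nonempty K] [Fintype J] [Nonempty J]
    (hK : 1 < Fintype.card K)
    (σ2 : ℝ) (hσ : 0 < σ2)
    (α : K → K → ℝ) (hα : ∀ n k, 0 < α n k)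
    (q : K → J → K → ℝ) (hq : ∀ n j k, 0 < q n j k)
    (M : ℝ) (hM : 0 < M)
    (effCh : K → (J → ℝ) → ℝ)
    (heff : ∀ (u : K) (lamv : J → ℝ), effCh u lamv =
      (α u u) ^ 2
      + M * (∑ j, (q u j u) ^ 2
        + ∑ j, lamv j * (Real.pi * Real.sqrt Real.pi * α u u / 4 * q u j u - (q u j u) ^ 2))
      + M ^ 2 * Real.pi ^ 2 / 16 * (∑ j, lamv j * q u j u) ^ 2)
    (γ : (J → K → ℝ) → (K → ℝ) → K → ℝ)
    (hγ : ∀ (Λ : J → K → ℝ) (P : K → ℝ) (u : K), γ Λ P u =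
      P u * effCh u (fun j => Λ j u)
      / (σ2 + ∑ n ∈ Finset.univ.erase u, P n * ((α n u) ^ 2 + M * ∑ j, (q n j u) ^ 2)))
    (Λ1 Λ2 : J → K → ℝ)
    (hΛ1 : ∀ j u, Λ1 j u = 0 ∨ Λ1 j u = 1) (hΛ1sum : ∀ j, ∑ u, Λ1 j u ≤ 1)
    (hΛ2 : ∀ j u, Λ2 j u = 0 ∨ Λ2 j u = 1) (hΛ2sum : ∀ j, ∑ u, Λ2 j u ≤ 1)
    (P1 : K → ℝ) (hP1 : ∀ u, 0 < P1 u)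
    (hdom : ∀ u : K, γ Λ2 P1 u > γ Λ1 P1 u) :
    (∀ u : K, effCh u (fun j => Λ2 j u) > effCh u (fun j => Λ1 j u)) ∧
    (∀ P0 : K → ℝ, (∀ u, 0 < P0 u) →
      (∀ u : K, γ Λ2 P0 u > γ Λ1 P0 u) ∧
      (⨅ u : K, γ Λ2 P0 u) > ⨅ u : K, γ Λ1 P0 u) :=
  stmt_14_general σ2 hσ α q M hM effCh γ hγ Λ1 Λ2 P1 hP1 hdom
end
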